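/- In spherical coordinates x̱ = r ω with r = |x| and ω ∈ S^{m-1}, the Dunkl Dirac operator takes the form D_k = ω (∂_r + (1/r) Γ_k), where Γ_k = D_k x̱ + μ + 𝔼 is the Gamma operator. -/

import Mathlib

open scoped BigOperators RealInnerProductSpace
open MeasureTheory

namespace CGDunkl

/-- The underlying Euclidean space `ℝ^m`. -/
abbrev V (m : ℕ) := EuclideanSpace ℝ (Fin m)

/-- The quadratic form `x ↦ -‖x‖²` on `ℝ^m`, whose Clifford algebra is `ℝ_{0,m}`
(so that `eᵢ eⱼ + eⱼ eᵢ = -2 δᵢⱼ`). -/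
noncomputable def Q (m : ℕ) : QuadraticForm ℝ (V m) :=
  - LinearMap.BilinMap.toQuadraticMap (innerₗ (V m) : LinearMap.BilinForm ℝ (V m))

/-- A (normed) model of the Clifford algebra `ℝ_{0,m}`: an `ℝ`-algebra isomorphism from
the Clifford algebra of `-‖·‖²` on `ℝ^m` to a normed algebra `A`. -/
abbrev CliffordModel (m : ℕ) (A : Type*) [NormedRing A] [NormedAlgebra ℝ A] :=
  CliffordAlgebra (Q m) ≃ₐ[ℝ] A

variable {m : ℕ} {A : Type*} [NormedRing A] [NormedAlgebra ℝ A]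

/-- The Clifford generators `e_j`. -/
noncomputable def ee (F : CliffordModel m A) (j : Fin m) : A :=
  F (CliffordAlgebra.ι (Q m) (EuclideanSpace.single j 1))

/-- The vector variable `x̱ = Σⱼ eⱼ xⱼ`. -/
noncomputable def xv (F : CliffordModel m A) (x : V m) : A :=
  F (CliffordAlgebra.ι (Q m) x)

/-- Clifford conjugation, the anti-involution with `conj eᵢ = -eᵢ`
(the composition of grade reversion and grade involution). -/
noncomputable def cconj (F : CliffordModel m A) (a : A) : A :=
  F (CliffordAlgebra.reverse (CliffordAlgebra.involute (F.symm a)))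

/-- The reflection in the hyperplane orthogonal to `α`. -/
noncomputable def reflect {m : ℕ} (α x : V m) : V m :=
  x - ((2 * ⟪α, x⟫) / ⟪α, α⟫) • α

/-- The data of a (reduced, normalized) root system `R = R₊ ∪ (-R₊)` in `ℝ^m`
together with a nonnegative `G`-invariant multiplicity function `κ`. -/
structure DunklData (m : ℕ) where
  /-- the root system -/
  R : Finset (V m)
  /-- the positive subsystem -/
  Rplus : Finset (V m)
  /-- the multiplicity function -/
  κ : V m → ℝ
  root_ne_zero : ∀ α ∈ R, α ≠ 0
  /-- normalization `⟨α, α⟩ = 2` -/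
  norm_two : ∀ α ∈ R, ⟪α, α⟫ = (2 : ℝ)
  /-- the root system is reduced -/
  reduced : ∀ α ∈ R, ∀ c : ℝ, c • α ∈ R → c = 1 ∨ c = -1
  /-- `R` is preserved by each reflection `r_α`, `α ∈ R` -/
  stable : ∀ α ∈ R, ∀ β ∈ R, reflect α β ∈ R
  /-- `R` is the union of `R₊` and `-R₊` -/
  split : ∀ α : V m, α ∈ R ↔ (α ∈ Rplus ∨ -α ∈ Rplus)
  pos_disjoint : ∀ α ∈ Rplus, -α ∉ Rplus
  /-- the multiplicity function is invariant under the reflection group -/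
  invariant : ∀ α ∈ R, ∀ β ∈ R, κ (reflect α β) = κ β
  nonneg : ∀ α ∈ R, 0 ≤ κ α

/-- `γ = Σ_{α ∈ R₊} κ_α`. -/
noncomputable def gammaK (D : DunklData m) : ℝ := ∑ α ∈ D.Rplus, D.κ α

/-- The Dunkl dimension `μ = m + 2γ`. -/
noncomputable def mu (D : DunklData m) : ℝ := m + 2 * gammaK D

/-- The Dunkl operator `T_i`, acting on functions with values in the Clifford algebra. -/
noncomputable def T (D : DunklData m) (i : Fin m) (f : V m → A) (x : V m) : A :=
  fderiv ℝ f x (EuclideanSpace.single i 1) +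
    ∑ α ∈ D.Rplus, (D.κ α * (α i) / ⟪α, x⟫) • (f x - f (reflect α x))

/-- The Dunkl Dirac operator `D_k = Σⱼ eⱼ T_j`. -/
noncomputable def Dirac (F : CliffordModel m A) (D : DunklData m) (f : V m → A) (x : V m) : A :=
  ∑ j : Fin m, ee F j * T D j f x

/-- The Dunkl Laplacian `Δ_k = Σᵢ Tᵢ²`. -/
noncomputable def Lap (D : DunklData m) (f : V m → A) (x : V m) : A :=
  ∑ i : Fin m, T D i (T D i f) x

/-- The Euler operator `𝔼 = Σᵢ xᵢ ∂_{xᵢ}`. -/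
noncomputable def Euler (f : V m → A) (x : V m) : A := fderiv ℝ f x x

/-- The angular Dunkl Dirac operator (Gamma operator) `Γ_k = D_k x̱ + μ + 𝔼`. -/
noncomputable def Gam (F : CliffordModel m A) (D : DunklData m) (f : V m → A) (x : V m) : A :=
  Dirac F D (fun y => xv F y * f y) x + mu D • f x + Euler f x

/-- The regular set: the complement of the hyperplane arrangement, where the pointwise
formula for the Dunkl operators is valid. -/
def Reg (D : DunklData m) : Set (V m) := {x | ∀ α ∈ D.Rplus, ⟪α, x⟫ ≠ 0}

/-- Left solid inner Dunkl monogenic of order `k`: a smooth function, homogeneous (as a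
polynomial) of degree `k`, with `D_k M = 0`. -/
def IsInner (F : CliffordModel m A) (D : DunklData m) (k : ℕ) (M : V m → A) : Prop :=
  ContDiff ℝ (⊤ : ℕ∞) M ∧ (∀ (c : ℝ) (x : V m), M (c • x) = c ^ k • M x) ∧
    ∀ x ∈ Reg D, Dirac F D M x = 0

/-- Left solid outer Dunkl monogenic of order `k`: left Dunkl monogenic on `ℝ^m ∖ {0}` and
homogeneous of degree `-(k + μ - 1)`. -/
def IsOuter (F : CliffordModel m A) (D : DunklData m) (k : ℕ) (Qf : V m → A) : Prop :=
  ContDiffOn ℝ (⊤ : ℕ∞) Qf {x | x ≠ 0} ∧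
    (∀ c : ℝ, 0 < c → ∀ x : V m, x ≠ 0 →
      Qf (c • x) = ((c : ℝ) ^ (-((k : ℝ) + mu D - 1)) : ℝ) • Qf x) ∧
    ∀ x ∈ Reg D, x ≠ 0 → Dirac F D Qf x = 0

/-- The weight function `w_k(x) = Π_{α ∈ R₊} |⟨x, α⟩|^{2 κ_α}`. -/
noncomputable def w (D : DunklData m) (x : V m) : ℝ :=
  ∏ α ∈ D.Rplus, |⟪x, α⟫| ^ (2 * D.κ α)



/-! ### Auxiliary lemmas -/

section Aux

variable (F : CliffordModel m A)

lemma Q_apply' {m : ℕ} (v : V m) : Q m v = -⟪v, v⟫ := by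
  simp [Q]

lemma polar_Q {m : ℕ} (u v : V m) : QuadraticMap.polar (Q m) u v = -(2 * ⟪u, v⟫) := by
  simp only [QuadraticMap.polar, Q_apply', real_inner_add_add_self]
  ring

lemma xv_sq (v : V m) : xv F v * xv F v = (-⟪v, v⟫ : ℝ) • (1 : A) := by
  rw [xv, ← map_mul, CliffordAlgebra.ι_sq_scalar, Q_apply', ← Algebra.algebraMap_eq_smul_one,
    AlgEquiv.commutes]

lemma xv_anticomm (u v : V m) :
    xv F u * xv F v = (-(2 * ⟪u, v⟫) : ℝ) • (1 : A) - xv F v * xv F u := by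
  rw [xv, xv, ← map_mul F, CliffordAlgebra.ι_mul_ι_comm, polar_Q, map_sub, map_mul,
    ← Algebra.algebraMap_eq_smul_one, AlgEquiv.commutes]

lemma xv_sub (u v : V m) : xv F (u - v) = xv F u - xv F v := by simp [xv]

lemma xv_smul' (c : ℝ) (v : V m) : xv F (c • v) = c • xv F v := by simp [xv]

lemma xv_single (j : Fin m) : xv F (EuclideanSpace.single j 1) = ee F j := rfl

lemma sum_single (v : V m) : ∑ j : Fin m, v j • (EuclideanSpace.single j 1 : V m) = v := by
  ext i
  have h : (∑ j : Fin m, v j • (EuclideanSpace.single j 1 : V m)) i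
      = ∑ j : Fin m, (v j • (EuclideanSpace.single j 1 : V m)) i :=
    by rw [WithLp.ofLp_sum]; exact Finset.sum_apply i Finset.univ _
  rw [h]
  simp [EuclideanSpace.single_apply]

lemma xv_eq_sum (v : V m) : xv F v = ∑ j : Fin m, v j • ee F j := by
  conv_lhs => rw [← sum_single v]
  simp [xv, ee]

/-- `xv` as a continuous linear map. -/
noncomputable def xvL : V m →L[ℝ] A :=
  LinearMap.toContinuousLinearMap (F.toLinearMap ∘ₗ (CliffordAlgebra.ι (Q m)))

lemma xvL_apply (v : V m) : xvL F v = xv F v := rfl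

lemma fderiv_xv_mul {g : V m → A} {x : V m}
    (hg : DifferentiableAt ℝ g x) (v : V m) :
    fderiv ℝ (fun y => xv F y * g y) x v = xv F v * g x + xv F x * fderiv ℝ g x v := by
  have h0 : HasFDerivAt (fun y => xv F y) (xvL F) x := (xvL F).hasFDerivAt
  have h := h0.mul' hg.hasFDerivAt
  rw [show (fun y => xv F y * g y) = (fun y => xv F y) * g from rfl, h.fderiv]
  simp [xvL_apply, smul_eq_mul]
  exact add_comm _ _

lemma sum_swap_clifford (D : DunklData m) (x : V m) (w : V m → A) :
    ∑ j : Fin m, ee F j * ∑ α ∈ D.Rplus, (D.κ α * α j / ⟪α, x⟫) • w α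
      = ∑ α ∈ D.Rplus, (D.κ α / ⟪α, x⟫) • (xv F α * w α) := by
  simp_rw [Finset.mul_sum]
  rw [Finset.sum_comm]
  refine Finset.sum_congr rfl fun α hα => ?_
  calc ∑ j : Fin m, ee F j * ((D.κ α * α j / ⟪α, x⟫) • w α)
      = ∑ j : Fin m, (D.κ α / ⟪α, x⟫) • (α j • (ee F j * w α)) := by
        refine Finset.sum_congr rfl fun j _ => ?_
        rw [mul_smul_comm, smul_smul]
        congr 1
        ring
    _ = (D.κ α / ⟪α, x⟫) • ((∑ j : Fin m, α j • ee F j) * w α) := by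
        rw [← Finset.smul_sum, Finset.sum_mul]
        simp_rw [smul_mul_assoc]
    _ = _ := by rw [← xv_eq_sum]

/-- The reflection at a normalized root. -/
lemma reflect_eq (D : DunklData m) {α : V m} (hα : α ∈ D.Rplus) (x : V m) :
    reflect α x = x - ⟪α, x⟫ • α := by
  have hαR : α ∈ D.R := (D.split α).mpr (Or.inl hα)
  rw [reflect, D.norm_two α hαR]
  rw [show (2 * ⟪α, x⟫) / 2 = ⟪α, x⟫ by ring]

/-- Key algebraic identity for one root. -/
lemma key_alg {s κ : ℝ} (hs : s ≠ 0) {Aa X gx gρ : A}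
    (hA2 : Aa * Aa = (-2 : ℝ) • (1 : A))
    (hAX : Aa * X = (-(2 * s)) • (1 : A) - X * Aa) :
    (κ / s) • (Aa * (X * gx - (X - s • Aa) * gρ))
      = -(X * ((κ / s) • (Aa * (gx - gρ)))) - (2 * κ) • gx := by
  have hmulX : ∀ c : A, Aa * (X * c) = (-(2 * s)) • c - X * (Aa * c) := by
    intro c
    rw [← mul_assoc, hAX, sub_mul, smul_mul_assoc, one_mul, mul_assoc]
  have hmulA : ∀ c : A, Aa * (Aa * c) = (-2 : ℝ) • c := by
    intro c
    rw [← mul_assoc, hA2, smul_mul_assoc, one_mul]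
  simp only [mul_sub, sub_mul, smul_mul_assoc, mul_smul_comm, smul_sub, smul_smul,
    hmulX, hmulA]
  match_scalars <;> field_simp <;> ring

end Aux


/-- Anticommutation of the Dunkl Dirac operator with the vector variable:
`D_k (x̱ g) = - x̱ D_k g - 2 𝔼 g - μ g` on the regular set. -/
lemma dirac_xv_mul (F : CliffordModel m A) (D : DunklData m)
    (g : V m → A) (hg : ContDiffOn ℝ (⊤ : ℕ∞) g {x : V m | x ≠ 0}) :
    ∀ x ∈ Reg D, x ≠ 0 →
      Dirac F D (fun y => xv F y * g y) x
        = -(xv F x * Dirac F D g x) - (2 : ℝ) • Euler g x - mu D • g x := by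
  intro x hx hx0
  have hgd : DifferentiableAt ℝ g x := by
    have ho : IsOpen {y : V m | y ≠ 0} := isOpen_ne
    exact (hg.differentiableOn (by simp)).differentiableAt (ho.mem_nhds hx0)
  have hs : ∀ α ∈ D.Rplus, ⟪α, x⟫ ≠ 0 := hx
  have hinner : ∀ j : Fin m, ⟪(EuclideanSpace.single j 1 : V m), x⟫ = x j := by
    intro j
    simp [EuclideanSpace.inner_single_left]
  have hee : ∀ j : Fin m, ee F j * ee F j = (-1 : ℝ) • (1 : A) := by
    intro j
    rw [← xv_single, xv_sq]
    norm_num [EuclideanSpace.inner_single_left, EuclideanSpace.single_apply]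
  have hx_sum : (∑ j : Fin m, x j • fderiv ℝ g x (EuclideanSpace.single j 1))
      = fderiv ℝ g x x := by
    calc ∑ j : Fin m, x j • fderiv ℝ g x (EuclideanSpace.single j 1)
        = ∑ j : Fin m, fderiv ℝ g x (x j • EuclideanSpace.single j 1) := by simp
      _ = fderiv ℝ g x (∑ j : Fin m, x j • (EuclideanSpace.single j 1 : V m)) :=
          (map_sum _ _ _).symm
      _ = fderiv ℝ g x x := by rw [sum_single]
  have hT : ∀ j : Fin m, T D j (fun y => xv F y * g y) x
      = ee F j * g x + xv F x * fderiv ℝ g x (EuclideanSpace.single j 1)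
        + ∑ α ∈ D.Rplus, (D.κ α * α j / ⟪α, x⟫) •
            (xv F x * g x - xv F (reflect α x) * g (reflect α x)) := by
    intro j
    rw [T, fderiv_xv_mul F hgd, xv_single, add_assoc]
  have hsplit : Dirac F D (fun y => xv F y * g y) x
      = (∑ j : Fin m, ee F j * (ee F j * g x))
        + (∑ j : Fin m, ee F j * (xv F x * fderiv ℝ g x (EuclideanSpace.single j 1)))
        + ∑ j : Fin m, ee F j * ∑ α ∈ D.Rplus, (D.κ α * α j / ⟪α, x⟫) •
            (xv F x * g x - xv F (reflect α x) * g (reflect α x)) := by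
    rw [Dirac]
    simp_rw [hT, mul_add, Finset.sum_add_distrib]
  have hS1 : (∑ j : Fin m, ee F j * (ee F j * g x)) = -((m : ℝ) • g x) := by
    have h1 : ∀ j : Fin m, ee F j * (ee F j * g x) = (-1 : ℝ) • g x := by
      intro j
      rw [← mul_assoc, hee j, smul_mul_assoc, one_mul]
    rw [Finset.sum_congr rfl fun j _ => h1 j, Finset.sum_const, Finset.card_univ,
      Fintype.card_fin, ← Nat.cast_smul_eq_nsmul ℝ]
    match_scalars
    ring
  have hS2 : (∑ j : Fin m, ee F j * (xv F x * fderiv ℝ g x (EuclideanSpace.single j 1)))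
      = -((2 : ℝ) • fderiv ℝ g x x)
        - xv F x * ∑ j : Fin m, ee F j * fderiv ℝ g x (EuclideanSpace.single j 1) := by
    have step : ∀ j : Fin m, ee F j * (xv F x * fderiv ℝ g x (EuclideanSpace.single j 1))
        = (-(2 * x j)) • fderiv ℝ g x (EuclideanSpace.single j 1)
          - xv F x * (ee F j * fderiv ℝ g x (EuclideanSpace.single j 1)) := by
      intro j
      rw [← mul_assoc, ← xv_single, xv_anticomm F (EuclideanSpace.single j 1) x, hinner j,
        sub_mul, smul_mul_assoc, one_mul, mul_assoc, xv_single]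
    rw [Finset.sum_congr rfl fun j _ => step j, Finset.sum_sub_distrib, ← Finset.mul_sum]
    congr 1
    have h2 : ∀ j : Fin m, (-(2 * x j)) • fderiv ℝ g x (EuclideanSpace.single j 1)
        = -((2 : ℝ) • (x j • fderiv ℝ g x (EuclideanSpace.single j 1))) := by
      intro j
      module
    rw [Finset.sum_congr rfl fun j _ => h2 j, Finset.sum_neg_distrib, ← Finset.smul_sum,
      hx_sum]
  have hS3 : (∑ j : Fin m, ee F j * ∑ α ∈ D.Rplus, (D.κ α * α j / ⟪α, x⟫) •
          (xv F x * g x - xv F (reflect α x) * g (reflect α x)))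
      = -(xv F x * ∑ α ∈ D.Rplus,
            (D.κ α / ⟪α, x⟫) • (xv F α * (g x - g (reflect α x))))
        - (2 * gammaK D) • g x := by
    rw [sum_swap_clifford]
    have step : ∀ α ∈ D.Rplus,
        (D.κ α / ⟪α, x⟫) • (xv F α * (xv F x * g x - xv F (reflect α x) * g (reflect α x)))
          = -(xv F x * ((D.κ α / ⟪α, x⟫) • (xv F α * (g x - g (reflect α x)))))
            - (2 * D.κ α) • g x := by
      intro α hα
      have hαR : α ∈ D.R := (D.split α).mpr (Or.inl hα)
      have h2 : ⟪α, α⟫ = (2 : ℝ) := D.norm_two α hαR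
      have hxvρ : xv F (reflect α x) = xv F x - ⟪α, x⟫ • xv F α := by
        rw [reflect_eq D hα, xv_sub, xv_smul']
      rw [hxvρ]
      exact key_alg (hs α hα) (by rw [xv_sq, h2]) (xv_anticomm F α x)
    rw [Finset.sum_congr rfl step, Finset.sum_sub_distrib, Finset.sum_neg_distrib,
      ← Finset.mul_sum, ← Finset.sum_smul]
    rw [show (∑ α ∈ D.Rplus, 2 * D.κ α) = 2 * gammaK D by rw [gammaK, Finset.mul_sum]]
  have hDg : Dirac F D g x
      = (∑ j : Fin m, ee F j * fderiv ℝ g x (EuclideanSpace.single j 1))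
        + ∑ α ∈ D.Rplus, (D.κ α / ⟪α, x⟫) • (xv F α * (g x - g (reflect α x))) := by
    rw [Dirac]
    simp_rw [T, mul_add, Finset.sum_add_distrib, sum_swap_clifford]
  rw [hsplit, hS1, hS2, hS3, hDg, Euler, mu, mul_add]
  module

/-- In spherical coordinates `x̱ = r ω`, the Dunkl Dirac operator takes the
form `D_k = ω (∂_r + (1/r) Γ_k)`, where `∂_r g (x) = (fderiv g x)(ω)` is the radial
derivative. -/
theorem dirac_spherical_form
    {m : ℕ} {A : Type*} [NormedRing A] [NormedAlgebra ℝ A]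
    (F : CliffordModel m A) (D : DunklData m)
    (g : V m → A) (hg : ContDiffOn ℝ (⊤ : ℕ∞) g {x : V m | x ≠ 0}) :
    ∀ x ∈ Reg D, x ≠ 0 →
      Dirac F D g x =
        xv F (‖x‖⁻¹ • x) * (fderiv ℝ g x (‖x‖⁻¹ • x) + ‖x‖⁻¹ • Gam F D g x) := by
  intro x hx hx0
  have hr : ‖x‖ ≠ 0 := norm_ne_zero_iff.mpr hx0
  have hkey := dirac_xv_mul F D g hg x hx hx0
  have hGam : Gam F D g x = -(xv F x * Dirac F D g x) - Euler g x := by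
    rw [Gam, hkey]
    module
  have hXX : xv F x * xv F x = (-(‖x‖ * ‖x‖) : ℝ) • (1 : A) := by
    rw [xv_sq, real_inner_self_eq_norm_mul_norm]
  rw [hGam, xv_smul', (fderiv ℝ g x).map_smul, Euler]
  have hcol : ‖x‖⁻¹ • fderiv ℝ g x x
        + ‖x‖⁻¹ • (-(xv F x * Dirac F D g x) - fderiv ℝ g x x)
      = ‖x‖⁻¹ • (-(xv F x * Dirac F D g x)) := by
    module
  rw [hcol, smul_mul_assoc, mul_smul_comm, smul_smul, mul_neg, ← mul_assoc, hXX,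
    smul_mul_assoc, one_mul]
  match_scalars
  field_simp

end CGDunkl
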